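/- For every k with 1 ≤ k ≤ n, the elementary symmetric polynomial e_k(z₁,…,zₙ), viewed as an element of K, lies in the intermediate field ℂ(ν₂, ν₃, …, ν_{2n−1}) ⊆ K generated over ℂ by the images of ν₂, …, ν_{2n−1}. -/

import Mathlib

open MvPolynomial Finset

noncomputable section

def Zv (n : ℕ) (j : Fin n) : MvPolynomial (Fin n ⊕ Fin n) ℂ := X (Sum.inl j)

def Wv (n : ℕ) (j : Fin n) : MvPolynomial (Fin n ⊕ Fin n) ℂ := X (Sum.inr j)

/-- The `k`-th normalized harmonic moment. -/
def nu (n : ℕ) [NeZero n] (k : ℕ) : MvPolynomial (Fin n ⊕ Fin n) ℂ :=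
  C (Complex.I / 4) *
    ∑ j : Fin n, (Wv n j - Wv n (j + 1)) *
      ∑ m ∈ Finset.range k, Zv n j ^ (k - 1 - m) * Zv n (j + 1) ^ m

/-- The field of fractions `K = ℂ(z₁,…,zₙ,w₁,…,wₙ)` of `R`. -/
abbrev KK (n : ℕ) := FractionRing (MvPolynomial (Fin n ⊕ Fin n) ℂ)

/-! ### Auxiliary setup -/

set_option linter.unusedSectionVars false

open Fin.NatCast

abbrev Rr (n : ℕ) := MvPolynomial (Fin n ⊕ Fin n) ℂ

def Ee (n i : ℕ) : Rr n := rename Sum.inl (esymm (Fin n) ℂ i)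

def Hh (n : ℕ) [NeZero n] (j : Fin n) (k : ℕ) : Rr n :=
  ∑ m ∈ Finset.range k, Zv n j ^ (k - 1 - m) * Zv n (j + 1) ^ m

lemma nu_eq (n : ℕ) [NeZero n] (k : ℕ) :
    nu n k = C (Complex.I / 4) * ∑ j : Fin n, (Wv n j - Wv n (j + 1)) * Hh n j k := rfl

lemma sum_shift {M : Type*} [AddCommMonoid M] (n : ℕ) [NeZero n] (f : Fin n → M) :
    ∑ j : Fin n, f (j+1) = ∑ j : Fin n, f j :=
  Fintype.sum_equiv (Equiv.addRight 1) _ _ (fun j => rfl)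

/-! ### Step A : algebraic identities among the moments -/

lemma vieta_at (n : ℕ) (j : Fin n) :
    ∑ i ∈ range (n+1), (-1 : MvPolynomial (Fin n) ℂ)^i * esymm (Fin n) ℂ i * (X j)^(n-i) = 0 := by
  have h := MvPolynomial.prod_C_add_X_eq_sum_esymm ℂ (Fin n)
  have h2 := congrArg (Polynomial.eval (-(X j : MvPolynomial (Fin n) ℂ))) h
  rw [Polynomial.eval_prod, Polynomial.eval_finset_sum] at h2
  simp only [Polynomial.eval_add, Polynomial.eval_X, Polynomial.eval_C, Polynomial.eval_mul,
    Polynomial.eval_pow, Fintype.card_fin] at h2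
  rw [Finset.prod_eq_zero (Finset.mem_univ j) (by ring)] at h2
  have h3 := congrArg (fun t => (-1 : MvPolynomial (Fin n) ℂ)^n * t) h2.symm
  simp only [mul_zero, Finset.mul_sum] at h3
  rw [← h3]
  apply Finset.sum_congr rfl
  intro i hi
  rw [Finset.mem_range] at hi
  rw [neg_pow]
  have hpow : ((-1 : MvPolynomial (Fin n) ℂ))^i = (-1)^n * (-1)^(n-i) := by
    rw [← pow_add]
    have : n + (n - i) = i + 2*(n-i) := by omega
    rw [this, pow_add, pow_mul]
    simp
  rw [hpow]; ring

lemma vieta_at' (n : ℕ) (j : Fin n) :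
    ∑ i ∈ range (n+1), (-1 : Rr n)^i * Ee n i * (Zv n j)^(n-i) = 0 := by
  have h := congrArg (rename (Sum.inl : Fin n → Fin n ⊕ Fin n)) (vieta_at n j)
  simpa [Ee, Zv, map_sum, map_mul, map_pow] using h

lemma geom (n : ℕ) [NeZero n] (j : Fin n) (k : ℕ) :
    Hh n j k * (Zv n (j+1) - Zv n j) = Zv n (j+1)^k - Zv n j^k := by
  have h := geom_sum₂_mul (Zv n (j+1)) (Zv n j) k
  rw [← h]
  apply congrArg (· * (Zv n (j+1) - Zv n j))
  exact Finset.sum_congr rfl (fun m hm => by ring)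

lemma Zadj_ne (n : ℕ) [NeZero n] (hn : 3 ≤ n) (j : Fin n) :
    Zv n (j+1) - Zv n j ≠ 0 := by
  rw [sub_ne_zero]
  intro h
  have h0 := Sum.inl.inj (MvPolynomial.X_injective h)
  have h2 : (1 : Fin n) = 0 := by
    have h3 := congrArg (fun t => -j + t) h0
    simpa using h3
  have h4 := congrArg Fin.val h2
  rw [Fin.val_one', Fin.val_zero, Nat.mod_eq_of_lt (by omega)] at h4
  omega

lemma Tzero (n : ℕ) [NeZero n] (hn : 3 ≤ n) (j : Fin n) {m : ℕ} (hm : n ≤ m) :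
    ∑ i ∈ range (n+1), (-1 : Rr n)^i * Ee n i * Hh n j (m-i) = 0 := by
  apply mul_right_cancel₀ (Zadj_ne n hn j)
  rw [zero_mul, Finset.sum_mul]
  have step1 : ∀ i ∈ range (n+1),
      (-1 : Rr n)^i * Ee n i * Hh n j (m-i) * (Zv n (j+1) - Zv n j)
        = Zv n (j+1)^(m-n) * ((-1)^i * Ee n i * Zv n (j+1)^(n-i))
          - Zv n j^(m-n) * ((-1)^i * Ee n i * Zv n j^(n-i)) := by
    intro i hi
    rw [Finset.mem_range] at hi
    have e1 : m - i = (m-n) + (n-i) := by omega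
    rw [mul_assoc, geom n j (m-i), e1, pow_add, pow_add]
    ring
  rw [Finset.sum_congr rfl step1, Finset.sum_sub_distrib, ← Finset.mul_sum, ← Finset.mul_sum,
    vieta_at', vieta_at', mul_zero, mul_zero, sub_zero]

lemma hkey (n : ℕ) [NeZero n] (hn : 3 ≤ n) {m : ℕ} (hm : n ≤ m) :
    ∑ i ∈ range (n+1), (-1 : Rr n)^i * Ee n i * nu n (m-i) = 0 := by
  have h1 : ∀ i ∈ range (n+1),
      (-1 : Rr n)^i * Ee n i * nu n (m-i)
        = ∑ j : Fin n, C (Complex.I / 4) * ((Wv n j - Wv n (j+1)) * ((-1)^i * Ee n i * Hh n j (m-i))) := by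
    intro i hi
    rw [nu_eq, Finset.mul_sum, Finset.mul_sum]
    exact Finset.sum_congr rfl (fun j hj => by ring)
  rw [Finset.sum_congr rfl h1, Finset.sum_comm]
  apply Finset.sum_eq_zero
  intro j hj
  rw [← Finset.mul_sum, ← Finset.mul_sum]
  have h2 : ∑ i ∈ range (n+1), (-1 : Rr n)^i * Ee n i * Hh n j (m-i) = 0 := Tzero n hn j hm
  rw [h2, mul_zero, mul_zero]

/-! ### Step C : a specialization with nonvanishing Hankel determinant -/

lemma geomC (x y : ℂ) (k : ℕ) :
    (∑ m ∈ range k, x ^ (k-1-m) * y ^ m) * (y - x) = y^k - x^k := by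
  have h := geom_sum₂_mul y x k
  rw [← h]
  congr 1
  exact Finset.sum_congr rfl fun m hm => by ring

section Specialization

variable (n : ℕ) [NeZero n]

def dd (j : Fin n) : ℂ :=
  if j.val = 0 then ((n:ℂ)-2)*((n:ℂ)-1)/2 else if j.val = 1 then -(((n:ℂ)-2)*((n:ℂ)+1))/2 else 1

def xx (j : Fin n) : ℂ := (j.val : ℂ)

def ee (j : Fin n) : ℂ := ∑ l ∈ range (j.val+1), dd n (l : Fin n)

def gg (j : Fin n) : ℂ := (4/Complex.I) * (ee n j * (xx n j - xx n (j+1)))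

def WW (j : Fin n) : ℂ := -∑ l ∈ range j.val, gg n (l : Fin n)

variable (hn : 3 ≤ n)
include hn

lemma dd_cast (l : ℕ) (hl : l < n) :
    dd n (l : Fin n) = if l = 0 then ((n:ℂ)-2)*((n:ℂ)-1)/2
      else if l = 1 then -(((n:ℂ)-2)*((n:ℂ)+1))/2 else 1 := by
  have : ((l : Fin n)).val = l := by
    simp [Fin.val_natCast, Nat.mod_eq_of_lt hl]
  rw [dd, this]

lemma dd_split (l : ℕ) (hl : l < n) :
    dd n (l : Fin n) = 1 + (if l = 0 then ((n:ℂ)-2)*((n:ℂ)-1)/2 - 1 else 0)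
      + (if l = 1 then -(((n:ℂ)-2)*((n:ℂ)+1))/2 - 1 else 0) := by
  rw [dd_cast n hn l hl]
  rcases Nat.eq_zero_or_pos l with h | h
  · simp [h]
  rcases Nat.lt_or_ge l 2 with h2 | h2
  · have : l = 1 := by omega
    simp [this]
  · have h0 : l ≠ 0 := by omega
    have h1 : l ≠ 1 := by omega
    simp [h0, h1]

lemma dd_sum_range (m : ℕ) (hm : m ≤ n) :
    ∑ l ∈ range m, dd n (l : Fin n)
      = m + (if 0 < m then ((n:ℂ)-2)*((n:ℂ)-1)/2 - 1 else 0)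
          + (if 1 < m then -(((n:ℂ)-2)*((n:ℂ)+1))/2 - 1 else 0) := by
  rw [Finset.sum_congr rfl (fun l hl => dd_split n hn l (by rw [Finset.mem_range] at hl; omega))]
  rw [Finset.sum_add_distrib, Finset.sum_add_distrib, Finset.sum_const, Finset.sum_ite_eq' (range m) 0,
    Finset.sum_ite_eq' (range m) 1]
  simp [Finset.mem_range]

lemma dd_sum : ∑ j : Fin n, dd n j = 0 := by
  have h : ∀ j : Fin n, dd n j = dd n ((j.val : ℕ) : Fin n) := by
    intro j; rw [Fin.cast_val_eq_self]
  rw [Finset.sum_congr rfl (fun j _ => h j), Fin.sum_univ_eq_sum_range (fun l => dd n (l : Fin n)) n,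
    dd_sum_range n hn n le_rfl]
  have h0 : (0:ℕ) < n := by omega
  have h1 : (1:ℕ) < n := by omega
  rw [if_pos h0, if_pos h1]
  ring

lemma ee_last : ee n (⟨n-1, by omega⟩ : Fin n) = 0 := by
  rw [ee]
  have : n - 1 + 1 = n := by omega
  simp only [this]
  have h : ∀ j : Fin n, dd n j = dd n ((j.val : ℕ) : Fin n) := by
    intro j; rw [Fin.cast_val_eq_self]
  rw [← Fin.sum_univ_eq_sum_range (fun l => dd n (l : Fin n)) n,
    ← Finset.sum_congr rfl (fun j _ => h j)]
  exact dd_sum n hn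

lemma dd_x_sum : ∑ j : Fin n, dd n j * xx n j = 0 := by
  have h : ∀ j : Fin n, dd n j * xx n j = dd n ((j.val : ℕ) : Fin n) * ((j.val : ℕ):ℂ) := by
    intro j; rw [Fin.cast_val_eq_self]; rfl
  rw [Finset.sum_congr rfl (fun j _ => h j),
    Fin.sum_univ_eq_sum_range (fun l => dd n (l : Fin n) * (l:ℂ)) n]
  have key : ∀ l ∈ range n, dd n (l : Fin n) * (l:ℂ)
      = (l:ℂ) + (if l = 1 then -(((n:ℂ)-2)*((n:ℂ)+1))/2 - 1 else 0) := by
    intro l hl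
    rw [Finset.mem_range] at hl
    rw [dd_cast n hn l hl]
    rcases Nat.eq_zero_or_pos l with h | h
    · simp [h]
    rcases Nat.lt_or_ge l 2 with h2 | h2
    · have : l = 1 := by omega
      simp [this]
    · have h0 : l ≠ 0 := by omega
      have h1 : l ≠ 1 := by omega
      simp [h0, h1]
  rw [Finset.sum_congr rfl key, Finset.sum_add_distrib, Finset.sum_ite_eq' (range n) 1]
  have hgauss : (∑ l ∈ range n, (l:ℂ)) = (n:ℂ)*((n:ℂ)-1)/2 := by
    have h2 := Finset.sum_range_id_mul_two n
    have : ((∑ l ∈ range n, l : ℕ) : ℂ) * 2 = (n:ℂ) * ((n:ℂ) - 1) := by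
      rw [← Nat.cast_ofNat, ← Nat.cast_mul, h2]
      push_cast [Nat.cast_sub (by omega : 1 ≤ n)]
      ring
    push_cast at this ⊢
    linear_combination this / 2
  rw [hgauss]
  have h1 : (1:ℕ) ∈ range n := by simp; omega
  rw [if_pos h1]
  ring

lemma dd_ne (j : Fin n) : dd n j ≠ 0 := by
  have hc2 : (n:ℂ) - 2 ≠ 0 := by
    have : (n:ℂ) ≠ ((2:ℕ):ℂ) := by exact_mod_cast (by omega : n ≠ 2)
    simpa using sub_ne_zero.mpr this
  have hc1 : (n:ℂ) - 1 ≠ 0 := by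
    have : (n:ℂ) ≠ ((1:ℕ):ℂ) := by exact_mod_cast (by omega : n ≠ 1)
    simpa using sub_ne_zero.mpr this
  have hp1 : (n:ℂ) + 1 ≠ 0 := by
    have : ((n+1:ℕ):ℂ) ≠ 0 := Nat.cast_ne_zero.mpr (by omega)
    push_cast at this; exact this
  rw [dd]
  split_ifs
  · exact div_ne_zero (mul_ne_zero hc2 hc1) two_ne_zero
  · rw [neg_div]
    exact neg_ne_zero.mpr (div_ne_zero (mul_ne_zero hc2 hp1) two_ne_zero)
  · exact one_ne_zero

omit hn

lemma ee_shift (f : Fin n → ℂ) :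
    ∑ j : Fin n, ee n j * f (j+1) = ∑ j : Fin n, ee n (j-1) * f j := by
  have h := sum_shift n (fun j => ee n (j-1) * f j)
  simpa [add_sub_cancel_right] using h

include hn

lemma val_one' : (1 : Fin n).val = 1 := by
  rw [Fin.val_one']; exact Nat.mod_eq_of_lt (by omega)

lemma ee_succ (j : Fin n) : ee n (j+1) - ee n j = dd n (j+1) := by
  rcases (by omega : j.val + 1 < n ∨ j.val + 1 = n) with h | h
  · have hv : (j+1).val = j.val + 1 := by
      rw [Fin.val_add, val_one' n hn, Nat.mod_eq_of_lt h]
    have hc : ((j.val + 1 : ℕ) : Fin n) = j + 1 := by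
      push_cast
      rfl
    rw [ee, ee, hv, Finset.sum_range_succ, hc]
    ring
  · have hj1 : j + 1 = 0 := by
      apply Fin.ext
      rw [Fin.val_add, val_one' n hn, h, Nat.mod_self]
      rfl
    have hj : j = (⟨n-1, by omega⟩ : Fin n) := Fin.ext (by simp; omega)
    rw [hj1, hj, ee_last n hn, sub_zero, ee]
    simp

lemma ee_sub (j : Fin n) : ee n j - ee n (j-1) = dd n j := by
  have h := ee_succ n hn (j-1)
  rwa [sub_add_cancel] at h

lemma gg_sum : ∑ j : Fin n, gg n j = 0 := by
  calc ∑ j : Fin n, gg n j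
      = (4/Complex.I) * ∑ j : Fin n, (ee n j * xx n j - ee n j * xx n (j+1)) := by
        rw [Finset.mul_sum]; exact Finset.sum_congr rfl fun j _ => by rw [gg]; ring
    _ = (4/Complex.I) * ∑ j : Fin n, (ee n j - ee n (j-1)) * xx n j := by
        rw [Finset.sum_sub_distrib, ee_shift n (xx n)]
        congr 1
        rw [← Finset.sum_sub_distrib]
        exact Finset.sum_congr rfl fun j _ => by ring
    _ = 0 := by
        rw [Finset.sum_congr rfl fun j _ => by rw [ee_sub n hn j], dd_x_sum n hn, mul_zero]

lemma WW_key (j : Fin n) :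
    (Complex.I/4) * (WW n j - WW n (j+1)) = ee n j * (xx n j - xx n (j+1)) := by
  have hgj : (Complex.I/4) * gg n j = ee n j * (xx n j - xx n (j+1)) := by
    rw [gg, ← mul_assoc, show (Complex.I/4) * (4/Complex.I) = 1 by
      rw [div_mul_div_comm, mul_comm]
      exact div_self (by simp [Complex.I_ne_zero]), one_mul]
  rw [← hgj]
  congr 1
  rcases (by omega : j.val + 1 < n ∨ j.val + 1 = n) with h | h
  · have hv : (j+1).val = j.val + 1 := by
      rw [Fin.val_add, val_one' n hn, Nat.mod_eq_of_lt h]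
    rw [WW, WW, hv, Finset.sum_range_succ, Fin.cast_val_eq_self]
    ring
  · have hj1 : j + 1 = 0 := by
      apply Fin.ext
      rw [Fin.val_add, val_one' n hn, h, Nat.mod_self]
      rfl
    have hsum : ∑ l ∈ range n, gg n (l : Fin n) = 0 := by
      rw [← Fin.sum_univ_eq_sum_range (fun l => gg n (l : Fin n)) n]
      rw [Finset.sum_congr rfl fun j _ => by rw [Fin.cast_val_eq_self]]
      exact gg_sum n hn
    have hn1 : n - 1 + 1 = n := by omega
    rw [hj1, WW, WW, Fin.val_zero, Finset.sum_range_zero, neg_zero, sub_zero]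
    have hjv : j.val = n - 1 := by omega
    rw [hjv]
    have hss : ∑ l ∈ range n, gg n (l : Fin n)
        = ∑ l ∈ range (n-1), gg n (l : Fin n) + gg n ((n-1 : ℕ) : Fin n) := by
      rw [← Finset.sum_range_succ, hn1]
    have hcast : ((n-1 : ℕ) : Fin n) = j := by
      have : j = ((j.val : ℕ) : Fin n) := (Fin.cast_val_eq_self j).symm
      rw [this, hjv]
    rw [hsum, hcast] at hss
    linear_combination hss

/-- The evaluation point. -/
def pp : Fin n ⊕ Fin n → ℂ := Sum.elim (xx n) (WW n)

lemma nu_eval (k : ℕ) :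
    MvPolynomial.eval (pp n) (nu n k) = ∑ j : Fin n, dd n j * xx n j ^ k := by
  have h1 : MvPolynomial.eval (pp n) (nu n k)
      = (Complex.I/4) * ∑ j : Fin n, (WW n j - WW n (j+1)) *
          ∑ m ∈ range k, xx n j ^ (k-1-m) * xx n (j+1) ^ m := by
    rw [nu_eq, map_mul, eval_C, map_sum]
    congr 1
    apply Finset.sum_congr rfl
    intro j _
    rw [map_mul, map_sub]
    simp [Hh, Wv, Zv, pp]
  rw [h1, Finset.mul_sum]
  calc ∑ j : Fin n, (Complex.I/4) * ((WW n j - WW n (j+1)) *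
          ∑ m ∈ range k, xx n j ^ (k-1-m) * xx n (j+1) ^ m)
      = ∑ j : Fin n, (ee n j * xx n j ^ k - ee n j * xx n (j+1) ^ k) := by
        apply Finset.sum_congr rfl
        intro j _
        rw [← mul_assoc, WW_key n hn j]
        have hg := geomC (xx n j) (xx n (j+1)) k
        linear_combination (-(ee n j)) * hg
    _ = ∑ j : Fin n, (ee n j - ee n (j-1)) * xx n j ^ k := by
        rw [Finset.sum_sub_distrib, ee_shift n (fun j => xx n j ^ k)]
        rw [← Finset.sum_sub_distrib]
        exact Finset.sum_congr rfl fun j _ => by ring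
    _ = ∑ j : Fin n, dd n j * xx n j ^ k := by
        exact Finset.sum_congr rfl fun j _ => by rw [ee_sub n hn j]

end Specialization

open Matrix

set_option maxHeartbeats 1000000



section Det
variable (n : ℕ) [NeZero n] (hn : 3 ≤ n)

def Nmat : Matrix (Fin n) (Fin n) (Rr n) :=
  Matrix.of fun r i => nu n (n + r.val - i.val - 1)

include hn

lemma Nmat_eval :
    (Nmat n).map (MvPolynomial.eval (pp n))
      = (Matrix.of fun r j : Fin n => xx n j ^ r.val)
        * (Matrix.of fun j i : Fin n => dd n j * xx n j ^ (n - 1 - i.val)) := by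
  ext r i
  rw [Matrix.map_apply, Matrix.mul_apply]
  simp only [Matrix.of_apply, Nmat]
  rw [nu_eval n hn]
  apply Finset.sum_congr rfl
  intro j _
  have he : n + r.val - i.val - 1 = r.val + (n - 1 - i.val) := by
    have := i.isLt; have := r.isLt; omega
  rw [he, pow_add]
  ring

omit hn in
lemma xx_inj : Function.Injective (xx n) := by
  intro a b h
  exact Fin.ext (Nat.cast_injective h)

omit hn in
lemma detB_ne : (Matrix.of fun r j : Fin n => xx n j ^ r.val).det ≠ 0 := by
  have h : (Matrix.of fun r j : Fin n => xx n j ^ r.val)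
      = Matrix.transpose (Matrix.vandermonde (xx n)) := by
    ext r j
    simp [Matrix.vandermonde_apply, Matrix.transpose_apply]
  rw [h, Matrix.det_transpose]
  exact Matrix.det_vandermonde_ne_zero_iff.mpr (xx_inj n)

lemma detC_ne : (Matrix.of fun j i : Fin n => dd n j * xx n j ^ (n - 1 - i.val)).det ≠ 0 := by
  set Cm := Matrix.of fun j i : Fin n => dd n j * xx n j ^ (n - 1 - i.val) with hCm
  have hperm := Matrix.det_permute' (Fin.revPerm) Cm
  have hsub : Cm.submatrix id Fin.revPerm
      = Matrix.of fun j i : Fin n => dd n j * Matrix.vandermonde (xx n) j i := by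
    ext j i
    simp only [Matrix.submatrix_apply, hCm, Matrix.of_apply, id_eq, Fin.revPerm_apply,
      Matrix.vandermonde_apply]
    congr 2
    rw [Fin.val_rev]
    have := i.isLt; omega
  rw [hsub] at hperm
  rw [Matrix.det_mul_column] at hperm
  intro h0
  rw [h0, mul_zero] at hperm
  rcases mul_eq_zero.mp hperm with h | h
  · have hd : (∏ i : Fin n, dd n i) ≠ 0 := Finset.prod_ne_zero_iff.mpr fun j _ => dd_ne n hn j
    exact hd h
  · exact Matrix.det_vandermonde_ne_zero_iff.mpr (xx_inj n) h

lemma detN_ne : (Nmat n).det ≠ 0 := by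
  intro h0
  have h1 := RingHom.map_det (MvPolynomial.eval (pp n)) (Nmat n)
  rw [h0, map_zero, RingHom.mapMatrix_apply, Nmat_eval n hn, Matrix.det_mul] at h1
  exact mul_ne_zero (detB_ne n) (detC_ne n hn) h1.symm

end Det

lemma det_mem {K : Type*} [Field K] (F : Subfield K) {m : Type*} [DecidableEq m] [Fintype m]
    (M : Matrix m m K) (h : ∀ i j, M i j ∈ F) : M.det ∈ F := by
  rw [Matrix.det_apply]
  exact sum_mem fun σ _ => by
    rw [Units.smul_def]
    exact zsmul_mem (prod_mem fun i _ => h _ _) _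

lemma nu_zero (n : ℕ) [NeZero n] : nu n 0 = 0 := by
  simp [nu_eq, Hh]

lemma nu_one (n : ℕ) [NeZero n] : nu n 1 = 0 := by
  have h : ∀ j : Fin n, (Wv n j - Wv n (j+1)) * Hh n j 1 = Wv n j - Wv n (j+1) := by
    intro j; simp [Hh]
  rw [nu_eq, Finset.sum_congr rfl (fun j _ => h j), Finset.sum_sub_distrib,
    sum_shift n (Wv n), sub_self, mul_zero]

theorem statement5 (n : ℕ) [NeZero n] (hn : 3 ≤ n) (k : ℕ) (hk1 : 1 ≤ k) (hkn : k ≤ n) :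
    algebraMap (MvPolynomial (Fin n ⊕ Fin n) ℂ) (KK n)
        (MvPolynomial.rename Sum.inl (MvPolynomial.esymm (Fin n) ℂ k)) ∈
      IntermediateField.adjoin ℂ
        {x : KK n | ∃ j, 2 ≤ j ∧ j ≤ 2 * n - 1 ∧
          x = algebraMap (MvPolynomial (Fin n ⊕ Fin n) ℂ) (KK n) (nu n j)} := by
  set φ := algebraMap (MvPolynomial (Fin n ⊕ Fin n) ℂ) (KK n) with hφdef
  set F := IntermediateField.adjoin ℂ
      {x : KK n | ∃ j, 2 ≤ j ∧ j ≤ 2 * n - 1 ∧ x = φ (nu n j)} with hFdef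
  have hφ : Function.Injective φ :=
    IsFractionRing.injective (MvPolynomial (Fin n ⊕ Fin n) ℂ) (KK n)
  have hmem : ∀ s : ℕ, s ≤ 2*n - 1 → φ (nu n s) ∈ F := by
    intro s hs
    by_cases h2 : 2 ≤ s
    · exact IntermediateField.subset_adjoin ℂ _ ⟨s, h2, hs, rfl⟩
    · rcases (by omega : s = 0 ∨ s = 1) with h | h
      · rw [h, nu_zero, map_zero]; exact zero_mem F
      · rw [h, nu_one, map_zero]; exact zero_mem F
  set M : Matrix (Fin n) (Fin n) (KK n) := (Nmat n).map φ with hMdef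
  have hMentry : ∀ r i : Fin n, M r i = φ (nu n (n + r.val - i.val - 1)) := by
    intro r i; rfl
  have hMdet : M.det ≠ 0 := by
    intro h
    have h1 := RingHom.map_det φ (Nmat n)
    rw [RingHom.mapMatrix_apply] at h1
    rw [← hMdef, h] at h1
    exact detN_ne n hn (hφ (by rw [h1, map_zero]))
  set q : Fin n → KK n := fun i => (-1 : KK n)^(i.val+1) * φ (Ee n (i.val+1)) with hqdef
  set b : Fin n → KK n := fun r => -φ (nu n (n + r.val)) with hbdef
  have hsys : M *ᵥ q = b := by
    funext r
    have h := congrArg φ (hkey n hn (m := n + r.val) (by omega))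
    rw [map_sum, map_zero, Finset.sum_range_succ'] at h
    have hE0 : Ee n 0 = 1 := by simp [Ee, MvPolynomial.esymm_zero]
    simp only [hE0, _root_.map_mul, _root_.map_pow, _root_.map_neg, _root_.map_one,
      pow_zero, one_mul, mul_one, Nat.sub_zero] at h
    have hmv : (M *ᵥ q) r = ∑ i : Fin n,
        φ (nu n (n + r.val - i.val - 1)) * ((-1 : KK n)^(i.val+1) * φ (Ee n (i.val+1))) := by
      simp [Matrix.mulVec, dotProduct, hMentry, hqdef]
    rw [hmv, Fin.sum_univ_eq_sum_range
      (fun l => φ (nu n (n + r.val - l - 1)) * ((-1 : KK n)^(l+1) * φ (Ee n (l+1)))) n]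
    have hterm : ∀ l ∈ range n,
        φ (nu n (n + r.val - l - 1)) * ((-1 : KK n)^(l+1) * φ (Ee n (l+1)))
          = (-1 : KK n)^(l+1) * φ (Ee n (l+1)) * φ (nu n (n + r.val - (l+1))) := by
      intro l _
      rw [show n + r.val - (l+1) = n + r.val - l - 1 by omega]
      ring
    rw [Finset.sum_congr rfl hterm]
    have : ∑ i ∈ range n, (-1:KK n)^(i+1) * φ (Ee n (i+1)) * φ (nu n (n + r.val - (i+1)))
        = -φ (nu n (n + r.val)) := by linear_combination h
    rw [this]
  have hunit : IsUnit M.det := isUnit_iff_ne_zero.mpr hMdet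
  have hq : q = M⁻¹ *ᵥ b := by
    have h2 : M⁻¹ *ᵥ (M *ᵥ q) = q := by
      rw [Matrix.mulVec_mulVec, Matrix.nonsing_inv_mul M hunit, Matrix.one_mulVec]
    rw [← hsys, h2]
  have hq2 : ∀ i, q i = (M.det)⁻¹ * Matrix.cramer M b i := by
    have h3 := Matrix.det_smul_inv_mulVec_eq_cramer M b hunit
    intro i
    have h4 := congrFun h3 i
    rw [Pi.smul_apply, smul_eq_mul] at h4
    have h5 : q i = (M⁻¹ *ᵥ b) i := congrFun hq i
    rw [h5, ← h4, ← mul_assoc, inv_mul_cancel₀ hMdet, one_mul]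
  have hMmem : ∀ r i : Fin n, M r i ∈ F := by
    intro r i
    rw [hMentry]
    exact hmem _ (by have := r.isLt; omega)
  have hbmem : ∀ r : Fin n, b r ∈ F := by
    intro r
    exact neg_mem (hmem _ (by have := r.isLt; omega))
  have hdetmem : M.det ∈ F := det_mem F.toSubfield M hMmem
  have hcramem : ∀ i : Fin n, Matrix.cramer M b i ∈ F := by
    intro i
    rw [Matrix.cramer_apply]
    apply det_mem F.toSubfield
    intro r j
    rw [Matrix.updateCol_apply]
    by_cases hji : j = i
    · rw [if_pos hji]; exact hbmem r
    · rw [if_neg hji]; exact hMmem r j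
  have hqF : ∀ i : Fin n, q i ∈ F := by
    intro i
    rw [hq2 i]
    exact mul_mem (inv_mem hdetmem) (hcramem i)
  have hk' : k - 1 < n := by omega
  have hfin : φ (Ee n k) = (-1 : KK n)^k * q ⟨k-1, hk'⟩ := by
    have hqv : q ⟨k-1, hk'⟩ = (-1 : KK n)^k * φ (Ee n k) := by
      have h0 : q ⟨k-1, hk'⟩ = (-1 : KK n)^((k-1)+1) * φ (Ee n ((k-1)+1)) := rfl
      rwa [show k-1+1 = k by omega] at h0
    rw [hqv, ← mul_assoc, ← pow_add]
    have h1 : (-1 : KK n)^(k + k) = 1 := by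
      rw [pow_add, ← mul_pow, show ((-1 : KK n) * -1) = 1 by ring, one_pow]
    rw [h1, one_mul]
  show φ (Ee n k) ∈ F
  rw [hfin]
  exact mul_mem (pow_mem (neg_mem (one_mem F)) k) (hqF _)
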